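/- There exists a₀ > 0 such that for every a with 0 < a < a₀, every integer m ≥ 1 satisfying (s₁ + 2rs₁a)^m = 1/(4r²s₂²a²), and every real λ with (1−2ra)/(1+2ra) < λ < 1/(1+2ra) and φ(λ) = 1, the quantities α₀ = (λ^m s₁^(m−1) (1+2ra)^m (λ s₁ s₂ (1+2ra) − s₁ s₂) + 1)/(λ s₁ (1+2ra) − 1) and c = α₀/(s₂(2λ−1)) are both strictly negative. -/
import Mathlib


/-- The auxiliary function φ from the paper. -/
noncomputable def phi (s₁ s₂ r a : ℝ) (m : ℕ) (l : ℝ) : ℝ :=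
  l ^ m * s₁ ^ (m - 1) * s₂ * (1 + 2 * r * a) ^ m * (l * (1 + 2 * r * a) - 1) *
    (s₂ * (2 * l - 1) * (l * s₁ * (1 + 2 * r * a) - 1) - s₁)

theorem stmt_14 (s₁ s₂ r : ℝ) (hs₁ : 1 < s₁) (hs₂ : 1 < s₂)
    (hsum : 1 / s₁ + 1 / s₂ = 1) (hr : 0 < r) :
    ∃ a₀ > 0, ∀ a : ℝ, 0 < a → a < a₀ → ∀ m : ℕ, 1 ≤ m →
      (s₁ + 2 * r * s₁ * a) ^ m = 1 / (4 * r ^ 2 * s₂ ^ 2 * a ^ 2) →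
      ∀ l : ℝ, (1 - 2 * r * a) / (1 + 2 * r * a) < l → l < 1 / (1 + 2 * r * a) →
        phi s₁ s₂ r a m l = 1 →
        (l ^ m * s₁ ^ (m - 1) * (1 + 2 * r * a) ^ m *
              (l * s₁ * s₂ * (1 + 2 * r * a) - s₁ * s₂) + 1) /
            (l * s₁ * (1 + 2 * r * a) - 1) < 0 ∧
        ((l ^ m * s₁ ^ (m - 1) * (1 + 2 * r * a) ^ m *
              (l * s₁ * s₂ * (1 + 2 * r * a) - s₁ * s₂) + 1) /
            (l * s₁ * (1 + 2 * r * a) - 1)) / (s₂ * (2 * l - 1)) < 0 := by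
  have hs₁0 : (0:ℝ) < s₁ := by linarith
  have hs₂0 : (0:ℝ) < s₂ := by linarith
  refine ⟨min (1/(6*r)) ((s₁-1)/(2*r*s₁)), lt_min (by positivity)
    (div_pos (by linarith) (by positivity)), ?_⟩
  intro a ha haa m hm hpow l hl1 hl2 hphi
  have ha1 : a < 1/(6*r) := lt_of_lt_of_le haa (min_le_left _ _)
  have ha2 : a < (s₁-1)/(2*r*s₁) := lt_of_lt_of_le haa (min_le_right _ _)
  rw [lt_div_iff₀ (by positivity)] at ha1
  rw [lt_div_iff₀ (by positivity)] at ha2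
  have hu : (0:ℝ) < 1 + 2*r*a := by nlinarith
  have hl1' : 1 - 2*r*a < l * (1 + 2*r*a) := (div_lt_iff₀ hu).mp hl1
  have hlu : l * (1 + 2*r*a) - 1 < 0 := by
    have := (lt_div_iff₀ hu).mp hl2; linarith
  have hl0 : 0 < l := by nlinarith
  have h2l : 0 < 2*l - 1 := by nlinarith
  have hls : 0 < l * s₁ * (1 + 2*r*a) - 1 := by nlinarith
  have hP : 0 < l ^ m * s₁ ^ (m-1) * (1 + 2*r*a) ^ m := by positivity
  have hK : 0 < s₂ * (2*l - 1) * (l * s₁ * (1 + 2*r*a) - 1) :=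
    mul_pos (mul_pos hs₂0 h2l) hls
  have hN : l ^ m * s₁ ^ (m - 1) * (1 + 2 * r * a) ^ m *
      (l * s₁ * s₂ * (1 + 2 * r * a) - s₁ * s₂) + 1 < 0 := by
    unfold phi at hphi
    have ht : (l ^ m * s₁ ^ (m-1) * (1 + 2*r*a) ^ m * s₂ *
        (s₂ * (2*l - 1) * (l * s₁ * (1 + 2*r*a) - 1))) *
        (l * (1 + 2*r*a) - 1) < 0 :=
      mul_neg_of_pos_of_neg (mul_pos (mul_pos hP hs₂0) hK) hlu
    nlinarith [ht, hphi]
  constructor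
  · exact div_neg_of_neg_of_pos hN hls
  · exact div_neg_of_neg_of_pos (div_neg_of_neg_of_pos hN hls) (mul_pos hs₂0 h2l)
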